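/- arXiv:2210.06248 — 2 statements merged into one kernel-verified Lean document; each statement's English description precedes it below -/
import Mathlib

section
/- Let Γ_o = ℤe₁ ⊕ ℤ(σa) be an oblique planar lattice, where σ > 0, ω ∈ (0,π), a = (cos ω)e₁ + (sin ω)e₂, and σa ∉ ℝe₁. If the rotation T_θ by angle θ, with sin θ ≠ 0, is a coincidence isometry of Γ_o, then σ² ∈ ℚ. -/
noncomputable section
open scoped InnerProductSpace

abbrev E2 := EuclideanSpace ℝ (Fin 2)

def e1 : E2 := EuclideanSpace.single 0 1
def e2 : E2 := EuclideanSpace.single 1 1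

/-- The ℤ-span of a set of vectors, as an additive subgroup of ℝ². -/
def latt (s : Set E2) : AddSubgroup E2 := (Submodule.span ℤ s).toAddSubgroup

/-- Image lattice of `Γ` under a linear map. -/
def imageLat (f : E2 →ₗ[ℝ] E2) (Γ : AddSubgroup E2) : AddSubgroup E2 :=
  Γ.map f.toAddMonoidHom

/-- `f` is a coincidence transformation of `Γ`: `Γ ∩ fΓ` has finite index in `Γ`. -/
def CI (Γ : AddSubgroup E2) (f : E2 →ₗ[ℝ] E2) : Prop :=
  (Γ ⊓ imageLat f Γ).relIndex Γ ≠ 0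

/-- Counterclockwise rotation of ℝ² by angle `θ`. -/
def rot (θ : ℝ) : E2 →ₗ[ℝ] E2 :=
  Matrix.toEuclideanLin !![Real.cos θ, -Real.sin θ; Real.sin θ, Real.cos θ]

/-- Reflection in the line through the origin orthogonal to `c`:
`x ↦ x - 2 (⟪x,c⟫ / ‖c‖²) • c`. -/
def reflc (c : E2) : E2 →ₗ[ℝ] E2 :=
  LinearMap.id - (2 / ‖c‖ ^ 2) • ((innerSL ℝ c : E2 →ₗ[ℝ] ℝ).smulRight c)

/-!
Let `v = σ • a`. If `T = rot θ` is a coincidence isometry of `Γ = ℤe₁ ⊕ ℤv`, then with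
`n = [Γ : Γ ∩ TΓ]` both `n e₁` and `n v` lie in `TΓ`, i.e. `T (p e₁ + q v) = n e₁` and
`T (r e₁ + s v) = n v` for integers `p, q, r, s`: the matrix of `T⁻¹` in the basis `{e₁, v}` is
rational. Comparing coordinates, `q v₂ = -n sin θ` forces `q ≠ 0`, the second equation gives
`s = p + 2 q v₁`, and then `q² ‖v‖² = n² - p s`. Since `‖v‖² = σ²`, `σ²` is rational.
-/

lemma mem_latt_pair {u v x : E2} :
    x ∈ latt {u, v} ↔ ∃ p q : ℤ, (p : ℝ) • u + (q : ℝ) • v = x := by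
  simp only [latt, Submodule.mem_toAddSubgroup, Submodule.mem_span_pair, Int.cast_smul_eq_zsmul]

lemma CI.exists_int_preimage_pair {u v : E2} {f : E2 →ₗ[ℝ] E2} (hf : CI (latt {u, v}) f) :
    ∃ n : ℕ, n ≠ 0 ∧ ∃ p q r s : ℤ,
      f ((p : ℝ) • u + (q : ℝ) • v) = n • u ∧ f ((r : ℝ) • u + (s : ℝ) • v) = n • v := by
  have hu : u ∈ latt {u, v} := Submodule.subset_span (by simp)
  have hv : v ∈ latt {u, v} := Submodule.subset_span (by simp)
  obtain ⟨x, hx, hxu⟩ := ((latt {u, v} ⊓ imageLat f (latt {u, v})).nsmul_relIndex_mem hu).2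
  obtain ⟨y, hy, hyv⟩ := ((latt {u, v} ⊓ imageLat f (latt {u, v})).nsmul_relIndex_mem hv).2
  obtain ⟨p, q, rfl⟩ := mem_latt_pair.1 hx
  obtain ⟨r, s, rfl⟩ := mem_latt_pair.1 hy
  exact ⟨_, hf, p, q, r, s, hxu, hyv⟩

lemma rot_apply_zero (θ : ℝ) (v : E2) :
    rot θ v 0 = Real.cos θ * v 0 - Real.sin θ * v 1 := by
  simp [rot, Matrix.mulVec, dotProduct, Fin.sum_univ_two]
  ring

lemma rot_apply_one (θ : ℝ) (v : E2) :
    rot θ v 1 = Real.sin θ * v 0 + Real.cos θ * v 1 := by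
  simp [rot, Matrix.mulVec, dotProduct, Fin.sum_univ_two]

@[simp] lemma e1_apply_zero : e1 0 = 1 := by simp [e1]

@[simp] lemma e1_apply_one : e1 1 = 0 := by simp [e1]

@[simp] lemma e2_apply_zero : e2 0 = 0 := by simp [e2]

@[simp] lemma e2_apply_one : e2 1 = 1 := by simp [e2]

lemma eq_smul_e1_of_apply_one_eq_zero {v : E2} (hv : v 1 = 0) : v = v 0 • e1 := by
  ext i
  fin_cases i <;> simp [hv]

/-- The coordinates of `rot θ (p e₁ + q v) = n e₁` and `rot θ (r e₁ + s v) = n v`, with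
`C = cos θ`, `S = sin θ`, `v = (x, y)`. -/
lemma sq_mul_normSq_eq_of_rot_equations {C S n p q r s x y : ℝ} (hCS : C ^ 2 + S ^ 2 = 1)
    (hS : S ≠ 0) (hy : y ≠ 0) (hn : n ≠ 0)
    (h₁ : C * (p + q * x) - S * (q * y) = n) (h₂ : S * (p + q * x) + C * (q * y) = 0)
    (h₃ : C * (r + s * x) - S * (s * y) = n * x) (h₄ : S * (r + s * x) + C * (s * y) = n * y) :
    q ≠ 0 ∧ q ^ 2 * (x ^ 2 + y ^ 2) = n ^ 2 - p * s := by
  have hpq : p + q * x = n * C := by linear_combination C * h₁ + S * h₂ - (p + q * x) * hCS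
  have hqy : q * y = -(n * S) := by linear_combination C * h₂ - S * h₁ - (q * y) * hCS
  have hsy : s * y = n * y * C - n * x * S := by
    linear_combination C * h₄ - S * h₃ - (s * y) * hCS
  have hq : q ≠ 0 := by
    rintro rfl
    exact mul_ne_zero hn hS (by linarith)
  have hs : s = p + 2 * q * x := by
    apply mul_left_cancel₀ hy
    linear_combination hsy - y * hpq - x * hqy
  refine ⟨hq, ?_⟩
  linear_combination (q * y - n * S) * hqy + (p + q * x + n * C) * hpq + n ^ 2 * hCS + p * hs

lemma sq_mul_normSq_eq_of_rot_eq {θ : ℝ} {n : ℕ} {p q r s : ℤ} {v : E2} (hθ : Real.sin θ ≠ 0)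
    (hv : v 1 ≠ 0) (hn : n ≠ 0) (hpq : rot θ ((p : ℝ) • e1 + (q : ℝ) • v) = n • e1)
    (hrs : rot θ ((r : ℝ) • e1 + (s : ℝ) • v) = n • v) :
    (q : ℝ) ≠ 0 ∧ (q : ℝ) ^ 2 * (v 0 ^ 2 + v 1 ^ 2) = n ^ 2 - p * s := by
  have h₁ := congrArg (fun w : E2 => w 0) hpq
  have h₂ := congrArg (fun w : E2 => w 1) hpq
  have h₃ := congrArg (fun w : E2 => w 0) hrs
  have h₄ := congrArg (fun w : E2 => w 1) hrs
  simp only [rot_apply_zero, rot_apply_one, PiLp.add_apply, PiLp.smul_apply, smul_eq_mul,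
    nsmul_eq_mul, e1_apply_zero, e1_apply_one, mul_one, mul_zero, zero_add] at h₁ h₂ h₃ h₄
  exact sq_mul_normSq_eq_of_rot_equations (by rw [add_comm, Real.sin_sq_add_cos_sq]) hθ hv
    (Nat.cast_ne_zero.2 hn) h₁ h₂ h₃ h₄

theorem stmt_8_general (σ ω θ : ℝ)
    (a : E2) (ha : a = Real.cos ω • e1 + Real.sin ω • e2)
    (hnot : ¬ ∃ t : ℝ, σ • a = t • e1)
    (hθ : Real.sin θ ≠ 0)
    (hCI : CI (latt {e1, σ • a}) (rot θ)) :
    ∃ q : ℚ, σ ^ 2 = (q : ℝ) := by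
  obtain ⟨n, hn, p, q, r, s, hpq, hrs⟩ := hCI.exists_int_preimage_pair
  have hv : (σ • a) 1 ≠ 0 := fun h => hnot ⟨_, eq_smul_e1_of_apply_one_eq_zero h⟩
  obtain ⟨hq, hkey⟩ := sq_mul_normSq_eq_of_rot_eq hθ hv hn hpq hrs
  have hnorm : (σ • a) 0 ^ 2 + (σ • a) 1 ^ 2 = σ ^ 2 := by
    simp only [ha, PiLp.smul_apply, PiLp.add_apply, e1_apply_zero, e1_apply_one, e2_apply_zero,
      e2_apply_one, smul_eq_mul]
    linear_combination σ ^ 2 * Real.sin_sq_add_cos_sq ω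
  refine ⟨((n : ℚ) ^ 2 - p * s) / q ^ 2, ?_⟩
  push_cast
  rw [← hnorm, eq_div_iff (pow_ne_zero 2 hq), mul_comm, hkey]

theorem stmt_8 (σ ω θ : ℝ) (hσ : 0 < σ) (hω : ω ∈ Set.Ioo 0 Real.pi)
    (a : E2) (ha : a = Real.cos ω • e1 + Real.sin ω • e2)
    (hnot : ¬ ∃ t : ℝ, σ • a = t • e1)
    (hθ : Real.sin θ ≠ 0)
    (hCI : CI (latt {e1, σ • a}) (rot θ)) :
    ∃ q : ℚ, σ ^ 2 = (q : ℝ) :=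
  stmt_8_general σ ω θ a ha hnot hθ hCI
end
end

section
/- Let σ > 0 and ω ∈ (0,π) with σ² ∈ ℚ and σ·cos ω ∈ ℚ. Then for every nonzero c = α₁e₁ + α₂σa in Γ_o = ℤe₁ ⊕ ℤ(σa), where a = (cos ω)e₁ + (sin ω)e₂, the reflection φ_c has rational matrix with respect to the basis {e₁, σa}, hence is a coincidence isometry of Γ_o. -/
/-!
The reflection is `x ↦ x - 2 (⟪x, c⟫ / ‖c‖²) c`, so with respect to `e₁, σa` its matrix
is built rationally from the integers `α₁, α₂` and the Gram entries `1, σ cos ω, σ²`: it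
preserves the `ℚ`-span of the basis. A common denominator `n` then gives `n • φ_c Γ ⊆ Γ`, and
since `φ_c` is an involution, `n • Γ ⊆ Γ ∩ φ_c Γ`; so `Γ / (Γ ∩ φ_c Γ)` is a finitely generated
torsion group, hence finite.
-/

noncomputable section
open scoped InnerProductSpace

open Submodule

abbrev ratSubfield : Subfield ℝ := (Rat.castHom ℝ).fieldRange

theorem exists_nsmul_mem_span_int_of_mem_span_rat {E : Type*} [AddCommGroup E] [Module ℝ E]
    {s : Set E} {y : E} (hy : y ∈ span ratSubfield s) :
    ∃ n : ℕ, 0 < n ∧ n • y ∈ span ℤ s := by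
  induction hy using span_induction with
  | mem x hx => exact ⟨1, one_pos, by simpa using subset_span hx⟩
  | zero => exact ⟨1, one_pos, by simp⟩
  | add x y _ _ hx hy =>
    obtain ⟨m, hm, hmx⟩ := hx
    obtain ⟨n, hn, hny⟩ := hy
    refine ⟨m * n, by positivity, ?_⟩
    rw [smul_add, mul_nsmul, mul_comm, mul_nsmul]
    exact add_mem (nsmul_mem hmx n) (nsmul_mem hny m)
  | smul a x _ hx =>
    obtain ⟨n, hn, hnx⟩ := hx
    obtain ⟨q, hq⟩ := RingHom.mem_fieldRange.mp a.2
    refine ⟨q.den * n, by positivity, ?_⟩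
    have hscale : (q.den * n) • (a • x) = q.num • (n • x) := by
      have hden : (q.den : ℝ) * q = q.num := by exact_mod_cast q.den_mul_eq_num
      rw [Subfield.smul_def, ← hq, ← Nat.cast_smul_eq_nsmul ℝ, ← Nat.cast_smul_eq_nsmul ℝ n,
        ← Int.cast_smul_eq_zsmul ℝ, smul_smul, smul_smul]
      congr 1
      simp only [eq_ratCast, Nat.cast_mul]
      linear_combination (n : ℝ) * hden
    rw [hscale]
    exact zsmul_mem hnx _

theorem relIndex_ne_zero_of_forall_nsmul_mem {G : Type*} [AddCommGroup G] {H Γ : AddSubgroup G}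
    (hΓ : Γ.FG) (h : ∀ x ∈ Γ, ∃ n : ℕ, 0 < n ∧ n • x ∈ H) : H.relIndex Γ ≠ 0 := by
  have : AddGroup.FG Γ := (AddGroup.fg_iff_addSubgroup_fg Γ).mpr hΓ
  have : Finite (Γ ⧸ H.addSubgroupOf Γ) := by
    refine AddCommGroup.finite_of_fg_isAddTorsion _ fun g ↦ ?_
    induction g using QuotientAddGroup.induction_on with
    | H x =>
      obtain ⟨n, hn, hnx⟩ := h x x.2
      refine (isOfFinAddOrder_iff_nsmul_eq_zero).mpr ⟨n, hn, ?_⟩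
      rw [← QuotientAddGroup.mk_nsmul, QuotientAddGroup.eq_zero_iff]
      exact hnx
  exact AddSubgroup.index_ne_zero_of_finite

theorem inner_mem_of_mem_span_pair {E : Type*} [NormedAddCommGroup E] [InnerProductSpace ℝ E]
    (K : Subfield ℝ) {u v x y : E} (huu : ⟪u, u⟫_ℝ ∈ K) (huv : ⟪u, v⟫_ℝ ∈ K)
    (hvv : ⟪v, v⟫_ℝ ∈ K) (hx : x ∈ span K {u, v}) (hy : y ∈ span K {u, v}) :
    ⟪x, y⟫_ℝ ∈ K := by
  obtain ⟨⟨a, ha⟩, ⟨b, hb⟩, rfl⟩ := mem_span_pair.mp hx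
  obtain ⟨⟨c, hc⟩, ⟨d, hd⟩, rfl⟩ := mem_span_pair.mp hy
  have hvu : ⟪v, u⟫_ℝ ∈ K := real_inner_comm u v ▸ huv
  simp only [Subfield.smul_def, inner_add_left, inner_add_right, real_inner_smul_left,
    real_inner_smul_right]
  repeat first | apply add_mem | apply mul_mem | assumption

theorem reflc_apply (c x : E2) : reflc c x = x - (2 / ‖c‖ ^ 2 * ⟪c, x⟫_ℝ) • c := by
  simp [reflc, smul_smul]

theorem reflc_involutive (c : E2) : Function.Involutive (reflc c) := by
  intro x
  rcases eq_or_ne c 0 with rfl | hc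
  · simp [reflc_apply]
  have hc2 : ‖c‖ ^ 2 ≠ 0 := by positivity
  rw [reflc_apply, reflc_apply, inner_sub_right, real_inner_smul_right,
    real_inner_self_eq_norm_sq, sub_sub, ← add_smul]
  convert sub_zero x using 2
  convert zero_smul ℝ c using 2
  field_simp
  ring

theorem reflc_mem_span_pair (K : Subfield ℝ) {u v c x : E2} (huu : ⟪u, u⟫_ℝ ∈ K)
    (huv : ⟪u, v⟫_ℝ ∈ K) (hvv : ⟪v, v⟫_ℝ ∈ K) (hc : c ∈ span K {u, v})
    (hx : x ∈ span K {u, v}) : reflc c x ∈ span K {u, v} := by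
  have hcc : ‖c‖ ^ 2 ∈ K := by
    rw [← real_inner_self_eq_norm_sq]
    exact inner_mem_of_mem_span_pair K huu huv hvv hc hc
  have hcx := inner_mem_of_mem_span_pair K huu huv hvv hc hx
  have ht : 2 / ‖c‖ ^ 2 * ⟪c, x⟫_ℝ ∈ K := mul_mem (div_mem (ofNat_mem K 2) hcc) hcx
  rw [reflc_apply]
  exact sub_mem hx (smul_mem _ (⟨_, ht⟩ : K) hc)

theorem CI_latt_of_involutive {s : Set E2} (hs : s.Finite) {f : E2 →ₗ[ℝ] E2}
    (hf : Function.Involutive f) (hfs : ∀ w ∈ s, f w ∈ span ratSubfield s) : CI (latt s) f := by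
  have hΓ : (latt s).FG := by
    refine ⟨hs.toFinset, ?_⟩
    rw [latt, span_int_eq_addSubgroupClosure, hs.coe_toFinset]
  refine relIndex_ne_zero_of_forall_nsmul_mem hΓ fun x hx ↦ ?_
  have hfx : f x ∈ span ratSubfield s := by
    induction hx using span_induction with
    | mem w hw => exact hfs w hw
    | zero => simp
    | add x y _ _ hx hy => rw [map_add]; exact add_mem hx hy
    | smul z x _ hx => rw [map_zsmul]; exact zsmul_mem hx z
  obtain ⟨n, hn, hnfx⟩ := exists_nsmul_mem_span_int_of_mem_span_rat hfx
  refine ⟨n, hn, nsmul_mem hx n, n • f x, hnfx, ?_⟩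
  change f (n • f x) = n • x
  rw [map_nsmul, hf]

theorem exists_rat_of_mem_span_pair {E : Type*} [AddCommGroup E] [Module ℝ E] {u v x : E}
    (hx : x ∈ span ratSubfield {u, v}) :
    ∃ q₁ q₂ : ℚ, x = (q₁ : ℝ) • u + (q₂ : ℝ) • v := by
  obtain ⟨⟨a, ha⟩, ⟨b, hb⟩, rfl⟩ := mem_span_pair.mp hx
  obtain ⟨q₁, rfl⟩ := RingHom.mem_fieldRange.mp ha
  obtain ⟨q₂, rfl⟩ := RingHom.mem_fieldRange.mp hb
  exact ⟨q₁, q₂, rfl⟩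

theorem inner_e1_e1 : ⟪e1, e1⟫_ℝ = 1 := by simp [e1]

theorem inner_e1_e2 : ⟪e1, e2⟫_ℝ = 0 := by simp [e1, e2, EuclideanSpace.inner_single_left]

theorem inner_e2_e2 : ⟪e2, e2⟫_ℝ = 1 := by simp [e2]

theorem inner_e1_cos_smul_add_sin_smul (ω : ℝ) :
    ⟪e1, Real.cos ω • e1 + Real.sin ω • e2⟫_ℝ = Real.cos ω := by
  rw [inner_add_right, real_inner_smul_right, real_inner_smul_right, inner_e1_e1, inner_e1_e2]
  ring

theorem inner_self_cos_smul_add_sin_smul (ω : ℝ) :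
    ⟪Real.cos ω • e1 + Real.sin ω • e2, Real.cos ω • e1 + Real.sin ω • e2⟫_ℝ = 1 := by
  simp only [inner_add_left, inner_add_right, real_inner_smul_left, real_inner_smul_right,
    inner_e1_e1, inner_e1_e2, real_inner_comm e1 e2, inner_e2_e2]
  linear_combination Real.sin_sq_add_cos_sq ω

theorem stmt_15_general (σ ω : ℝ)
    (hσ2 : ∃ r : ℚ, σ ^ 2 = (r : ℝ)) (hσω : ∃ r : ℚ, σ * Real.cos ω = (r : ℝ))
    (a : E2) (ha : a = Real.cos ω • e1 + Real.sin ω • e2)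
    (α₁ α₂ : ℤ) (c : E2) (hc : c = α₁ • e1 + α₂ • (σ • a)) :
    (∃ q₁₁ q₂₁ q₁₂ q₂₂ : ℚ,
      reflc c e1 = (q₁₁ : ℝ) • e1 + (q₂₁ : ℝ) • (σ • a) ∧
      reflc c (σ • a) = (q₁₂ : ℝ) • e1 + (q₂₂ : ℝ) • (σ • a)) ∧
    CI (latt {e1, σ • a}) (reflc c) := by
  obtain ⟨r₁, hr₁⟩ := hσ2
  obtain ⟨r₂, hr₂⟩ := hσω
  have h11 : ⟪e1, e1⟫_ℝ ∈ ratSubfield := inner_e1_e1 ▸ one_mem _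
  have h12 : ⟪e1, σ • a⟫_ℝ ∈ ratSubfield := by
    rw [real_inner_smul_right, ha, inner_e1_cos_smul_add_sin_smul, hr₂]
    exact RingHom.mem_fieldRange_self _ _
  have h22 : ⟪σ • a, σ • a⟫_ℝ ∈ ratSubfield := by
    rw [real_inner_smul_left, real_inner_smul_right, ha, inner_self_cos_smul_add_sin_smul,
      mul_one, ← sq, hr₁]
    exact RingHom.mem_fieldRange_self _ _
  have hc : c ∈ span ratSubfield {e1, σ • a} := by
    rw [hc]
    exact add_mem (zsmul_mem (subset_span (by simp)) _) (zsmul_mem (subset_span (by simp)) _)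
  have hrefl : ∀ w ∈ ({e1, σ • a} : Set E2), reflc c w ∈ span ratSubfield {e1, σ • a} :=
    fun w hw ↦ reflc_mem_span_pair _ h11 h12 h22 hc (subset_span hw)
  obtain ⟨q₁₁, q₂₁, hq₁⟩ := exists_rat_of_mem_span_pair (hrefl e1 (by simp))
  obtain ⟨q₁₂, q₂₂, hq₂⟩ := exists_rat_of_mem_span_pair (hrefl (σ • a) (by simp))
  exact ⟨⟨q₁₁, q₂₁, q₁₂, q₂₂, hq₁, hq₂⟩,
    CI_latt_of_involutive (Set.toFinite _) (reflc_involutive c) hrefl⟩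

theorem stmt_15 (σ ω : ℝ) (hσ : 0 < σ) (hω : ω ∈ Set.Ioo 0 Real.pi)
    (hσ2 : ∃ r : ℚ, σ ^ 2 = (r : ℝ)) (hσω : ∃ r : ℚ, σ * Real.cos ω = (r : ℝ))
    (a : E2) (ha : a = Real.cos ω • e1 + Real.sin ω • e2)
    (α₁ α₂ : ℤ) (c : E2) (hc : c = α₁ • e1 + α₂ • (σ • a)) (hc0 : c ≠ 0) :
    (∃ q₁₁ q₂₁ q₁₂ q₂₂ : ℚ,
      reflc c e1 = (q₁₁ : ℝ) • e1 + (q₂₁ : ℝ) • (σ • a) ∧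
      reflc c (σ • a) = (q₁₂ : ℝ) • e1 + (q₂₂ : ℝ) • (σ • a)) ∧
    CI (latt {e1, σ • a}) (reflc c) :=
  stmt_15_general σ ω hσ2 hσω a ha α₁ α₂ c hc
end
end
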